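/- Let n be an integer with n ≡ 5 (mod 8) and let m be an integer with m ≥ 4n − 4. Let l_a and l_b be positive integers of opposite parity (one odd, one even) with l_a + 2 < l_b and l_b + 2 ≤ m. Then the product of disjoint transpositions (l_a, l_a + 2)(l_b, l_b + 2) belongs to C(n, m). -/

import Mathlib

/-- The underlying function of the `n`-crossing permutation `π_j` over `{1, …, m}` (as a
function on `ℕ`): it sends `j + k` to `j + n - 1 - k` for `0 ≤ k ≤ n - 1` and fixes all
other points. -/
def crossFun (n j i : ℕ) : ℕ :=
  if j ≤ i ∧ i < j + n then 2 * j + n - 1 - i else i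

lemma crossFun_involutive (n j : ℕ) : Function.Involutive (crossFun n j) := by
  intro i
  unfold crossFun
  split_ifs <;> omega

/-- The `n`-crossing permutation `π_j`, viewed as a permutation of `ℕ` fixing every point
outside `{j, …, j + n - 1}`. -/
def crossPerm (n j : ℕ) : Equiv.Perm ℕ :=
  Function.Involutive.toPerm _ (crossFun_involutive n j)

/-- `C n m` is the subgroup of the symmetric group `S_m` (realized as permutations of `ℕ`
supported on `{1, …, m}`) generated by the `n`-crossing permutations `π_1, …, π_{m-n+1}`. -/
def C (n m : ℕ) : Subgroup (Equiv.Perm ℕ) :=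
  Subgroup.closure {σ | ∃ j, 1 ≤ j ∧ j ≤ m - n + 1 ∧ σ = crossPerm n j}

/-!
Squaring `π_k π_{k+1} π_{k+2}` gives `(k, k+2)(k+n-1, k+n+1)`. Conjugating by crossings yields
the double transpositions `(k, k+2)(l, l+2)` with `l ≡ k (mod 2)`, hence the 3-cycles
`(c, c+2, c+4)` throughout `{1, …, m}` (the reversal of `{1, …, m}` normalizes `C(n, m)`), and
with them the nested double transpositions `(u, v+2)(u+2, v)`. Conjugation by the 3-cycles slides
a pair `(a, a+2)` along its parity class without moving a pair of the other parity, so it suffices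
to find one product of two pairs of opposite parity in `C(n, m)`. For `n = 8s+5`, peeling four
transpositions at a time off the reversal `π_1` of `{1, …, n}` writes it as nested double
transpositions times its central part `(4s+1, 4s+5)(4s+2, 4s+4)`, which therefore lies in
`C(n, m)`; a 3-cycle turns this into `(4s+3, 4s+5)(4s+2, 4s+4)`.
-/

open Equiv

section Swap

variable {α : Type*} [DecidableEq α] {H : Subgroup (Perm α)} {g : Perm α}

theorem swap_mul_swap_mem_of_conj (hg : g ∈ Subgroup.normalizer (H : Set (Perm α)))
    {a b c d a' b' c' d' : α} (ha : g a = a') (hb : g b = b') (hc : g c = c') (hd : g d = d')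
    (h : swap a b * swap c d ∈ H) : swap a' b' * swap c' d' ∈ H := by
  have hconj : swap a' b' * swap c' d' = g * (swap a b * swap c d) * g⁻¹ := by
    rw [← ha, ← hb, ← hc, ← hd, swap_apply_apply, swap_apply_apply]
    group
  rw [hconj]
  exact (Subgroup.mem_normalizer_iff.1 hg _).1 h

theorem swap_mul_swap_comm {a b c d : α} (hac : a ≠ c) (had : a ≠ d) (hbc : b ≠ c)
    (hbd : b ≠ d) : swap a b * swap c d = swap c d * swap a b := by
  ext i
  simp only [Perm.mul_apply, swap_apply_def]
  split_ifs <;> simp_all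

/-- The 3-cycle `a ↦ b ↦ c ↦ a`. -/
def threeCycle (a b c : α) : Perm α := swap a c * swap a b

theorem threeCycle_eq_swap_mul_swap {a b c : α} (hab : a ≠ b) (hbc : b ≠ c) (hac : a ≠ c) :
    threeCycle a b c = swap a b * swap b c := by
  ext i
  simp only [threeCycle, Perm.mul_apply, swap_apply_def]
  split_ifs <;> simp_all

theorem threeCycle_rotate {a b c : α} (hab : a ≠ b) (hbc : b ≠ c) (hac : a ≠ c) :
    threeCycle a b c = threeCycle b c a := by
  ext i
  simp only [threeCycle, Perm.mul_apply, swap_apply_def]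
  split_ifs <;> simp_all

theorem threeCycle_inv (a b c : α) : (threeCycle a b c)⁻¹ = threeCycle a c b := by
  simp only [threeCycle, mul_inv_rev, swap_inv]

theorem threeCycle_mem_of_conj (hg : g ∈ Subgroup.normalizer (H : Set (Perm α)))
    {a b c a' b' c' : α} (ha : g a = a') (hb : g b = b') (hc : g c = c')
    (h : threeCycle a b c ∈ H) : threeCycle a' b' c' ∈ H :=
  swap_mul_swap_mem_of_conj hg ha hc ha hb h

end Swap

theorem crossPerm_apply (n j i : ℕ) :
    crossPerm n j i = if j ≤ i ∧ i < j + n then 2 * j + n - 1 - i else i := rfl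

theorem crossPerm_mul_self (n j : ℕ) : crossPerm n j * crossPerm n j = 1 :=
  Equiv.ext (crossFun_involutive n j)

theorem crossPerm_one (j : ℕ) : crossPerm 1 j = 1 := by
  ext i
  simp only [crossPerm_apply, Perm.one_apply]
  split_ifs <;> omega

theorem crossPerm_add_two (w l : ℕ) :
    crossPerm (w + 2) l = swap l (l + w + 1) * crossPerm w (l + 1) := by
  ext i
  simp only [crossPerm_apply, Perm.mul_apply, swap_apply_def]
  split_ifs <;> omega

theorem crossPerm_mem_C {n m j : ℕ} (hj : 1 ≤ j) (hjm : j ≤ m - n + 1) :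
    crossPerm n j ∈ C n m :=
  Subgroup.subset_closure ⟨j, hj, hjm, rfl⟩

theorem crossPerm_conj_crossPerm {n m j : ℕ} (hnm : n ≤ m) (hj : 1 ≤ j)
    (hjm : j ≤ m - n + 1) :
    crossPerm m 1 * crossPerm n j * (crossPerm m 1)⁻¹ = crossPerm n (m - n + 2 - j) := by
  rw [inv_eq_of_mul_eq_one_right (crossPerm_mul_self m 1)]
  ext i
  simp only [Perm.mul_apply, crossPerm_apply]
  split_ifs <;> omega

theorem crossPerm_mem_normalizer_C {n m : ℕ} (hnm : n ≤ m) :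
    crossPerm m 1 ∈ Subgroup.normalizer (C n m : Set (Perm ℕ)) := by
  refine Subgroup.normalizer_le_normalizer_closure _
    (Subgroup.mem_set_normalizer_iff.2 fun x => ⟨?_, fun hx => ?_⟩)
  · rintro ⟨j, hj, hjm, rfl⟩
    exact ⟨m - n + 2 - j, by omega, by omega, crossPerm_conj_crossPerm hnm hj hjm⟩
  · obtain ⟨j, hj, hjm, hx⟩ := hx
    refine ⟨m - n + 2 - j, by omega, by omega, ?_⟩
    rw [← crossPerm_conj_crossPerm hnm hj hjm, ← hx,
      inv_eq_of_mul_eq_one_right (crossPerm_mul_self m 1)]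
    simp only [← mul_assoc, crossPerm_mul_self, one_mul]
    rw [mul_assoc, crossPerm_mul_self, mul_one]

theorem crossPerm_triple_apply {n : ℕ} (hn : 1 ≤ n) (k i : ℕ) :
    (crossPerm n k * crossPerm n (k + 1) * crossPerm n (k + 2)) i =
      if k + 3 ≤ i ∧ i ≤ k + n + 1 then 2 * k + n + 1 - i
      else if k ≤ i ∧ i ≤ k + 2 then i + n - 1 else i := by
  simp only [Perm.mul_apply, crossPerm_apply]
  split_ifs <;> omega

theorem crossPerm_triple_sq {n : ℕ} (hn : 4 ≤ n) (k : ℕ) :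
    (crossPerm n k * crossPerm n (k + 1) * crossPerm n (k + 2)) ^ 2
      = swap k (k + 2) * swap (k + n - 1) (k + n + 1) := by
  ext i
  rw [sq, Perm.mul_apply, crossPerm_triple_apply (by omega), crossPerm_triple_apply (by omega)]
  simp only [Perm.mul_apply, swap_apply_def]
  split_ifs <;> omega

theorem swap_mul_swap_cross_mem_C {n m k : ℕ} (hn : 4 ≤ n) (hk : 1 ≤ k)
    (hkm : k + 2 ≤ m - n + 1) : swap k (k + 2) * swap (k + n - 1) (k + n + 1) ∈ C n m := by
  rw [← crossPerm_triple_sq hn]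
  exact pow_mem (mul_mem (mul_mem (crossPerm_mem_C hk (by omega))
    (crossPerm_mem_C (by omega) (by omega))) (crossPerm_mem_C (by omega) hkm)) 2

/-- Conjugation by `π_{k+t+3}` moves the far pair `(k+n-1, k+n+1)` next to `(k, k+2)`. -/
theorem swap_mul_swap_gap_mem_C {n m k t : ℕ} (hk : 1 ≤ k) (ht : t + 4 ≤ n)
    (hkm : k + t + 3 ≤ m - n + 1) :
    swap k (k + 2) * swap (k + 2 * t + 4) (k + 2 * t + 6) ∈ C n m := by
  rw [swap_comm (k + 2 * t + 4)]
  refine swap_mul_swap_mem_of_conj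
    ((C n m).le_normalizer (crossPerm_mem_C (j := k + t + 3) (by omega) hkm)) ?_ ?_ ?_ ?_
    (swap_mul_swap_cross_mem_C (by omega) hk (by omega))
  all_goals simp only [crossPerm_apply]; split_ifs <;> omega

theorem threeCycle_mem_C_of_add_five_le {n m c : ℕ} (hn : 5 ≤ n) (hc : 1 ≤ c)
    (hcm : c + 5 ≤ m - n + 1) : threeCycle c (c + 2) (c + 4) ∈ C n m := by
  have h : (swap c (c + 2) * swap (c + 6) (c + 8)) *
      (swap (c + 2) (c + 4) * swap (c + 6) (c + 8)) = threeCycle c (c + 2) (c + 4) := by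
    rw [mul_assoc, ← mul_assoc (swap (c + 6) (c + 8)),
      swap_mul_swap_comm (by omega) (by omega) (by omega) (by omega), mul_assoc, swap_mul_self,
      mul_one, threeCycle_eq_swap_mul_swap (by omega) (by omega) (by omega)]
  rw [← h]
  exact mul_mem (swap_mul_swap_gap_mem_C (t := 1) hc hn (by omega))
    (swap_mul_swap_gap_mem_C (t := 0) (by omega) (by omega) (by omega))

theorem threeCycle_mem_C {n m c : ℕ} (hn : 5 ≤ n) (hm : 2 * n + 4 ≤ m) (hc : 1 ≤ c)
    (hcm : c + 4 ≤ m) : threeCycle c (c + 2) (c + 4) ∈ C n m := by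
  by_cases hlow : c + 5 ≤ m - n + 1
  · exact threeCycle_mem_C_of_add_five_le hn hc hlow
  rw [← inv_mem_iff, threeCycle_inv, threeCycle_rotate (by omega) (by omega) (by omega)]
  refine threeCycle_mem_of_conj (crossPerm_mem_normalizer_C (n := n) (by omega)) ?_ ?_ ?_
    (threeCycle_mem_C_of_add_five_le (c := m - c - 3) hn (by omega) (by omega))
  all_goals simp only [crossPerm_apply]; split_ifs <;> omega

theorem crossPerm_add_eight (w l : ℕ) :
    crossPerm (w + 8) l = (swap l (l + w + 7) * swap (l + 2) (l + w + 5)) *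
      (swap (l + 1) (l + w + 6) * swap (l + 3) (l + w + 4)) * crossPerm w (l + 4) := by
  rw [crossPerm_add_two (w + 6), crossPerm_add_two (w + 4), crossPerm_add_two (w + 2),
    crossPerm_add_two w]
  simp only [mul_assoc]
  conv_rhs => rw [← mul_assoc (swap (l + 2) _) (swap (l + 1) _),
    swap_mul_swap_comm (by omega) (by omega) (by omega) (by omega), mul_assoc]
  ring_nf

theorem threeCycle_mem_C_of_mod_two_eq {n m x y : ℕ} (hn : 5 ≤ n) (hm : 2 * n + 4 ≤ m)
    (hx : 1 ≤ x) (hxy : x + 2 ≤ y) (hpar : y % 2 = x % 2) (hym : y + 2 ≤ m) :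
    threeCycle x (y + 2) y ∈ C n m := by
  obtain ⟨k, rfl⟩ : ∃ k, y = x + 2 * k + 2 := ⟨(y - x - 2) / 2, by omega⟩
  induction k with
  | zero => rw [← threeCycle_inv]; exact inv_mem (threeCycle_mem_C hn hm hx hym)
  | succ k ih =>
    refine threeCycle_mem_of_conj
      ((C n m).le_normalizer (threeCycle_mem_C (c := x + 2 * k + 2) hn hm (by omega) (by omega)))
      ?_ ?_ ?_ (ih (by omega) (by omega) (by omega))
    all_goals simp only [threeCycle, Perm.mul_apply, swap_apply_def]; split_ifs <;> omega

theorem swap_mul_swap_nested_mem_C {n m u v : ℕ} (hm : 2 * n + 4 ≤ m)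
    (hu : 1 ≤ u) (huv : u + 4 ≤ v) (hpar : v % 2 = u % 2) (hvn : v + 2 ≤ n) :
    swap u (v + 2) * swap (u + 2) v ∈ C n m := by
  obtain ⟨t, rfl⟩ : ∃ t, v = u + 2 * t + 4 := ⟨(v - u - 4) / 2, by omega⟩
  refine swap_mul_swap_mem_of_conj ((C n m).le_normalizer
    (threeCycle_mem_C_of_mod_two_eq (x := u + 2) (by omega) hm (by omega) huv (by omega)
      (by omega)))
    ?_ ?_ ?_ ?_ (swap_mul_swap_gap_mem_C (t := t) hu (by omega) (by omega))
  all_goals simp only [threeCycle, Perm.mul_apply, swap_apply_def]; split_ifs <;> omega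

theorem crossPerm_mul_center_mem_C {n m s l : ℕ} (hm : 2 * n + 4 ≤ m) (hl : 1 ≤ l)
    (hln : l + 8 * s + 4 ≤ n) : crossPerm (8 * s + 5) l *
      (swap (l + 4 * s) (l + 4 * s + 4) * swap (l + 4 * s + 1) (l + 4 * s + 3)) ∈ C n m := by
  induction s generalizing l with
  | zero =>
    have hcomm : Commute (swap (l + 1) (l + 3)) (swap l (l + 4)) :=
      swap_mul_swap_comm (by omega) (by omega) (by omega) (by omega)
    have h5 : crossPerm 5 l = swap l (l + 4) * swap (l + 1) (l + 3) := by
      rw [crossPerm_add_two 3, crossPerm_add_two 1, crossPerm_one, mul_one]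
    simp only [mul_zero, zero_add, add_zero]
    rw [h5, hcomm.mul_mul_mul_comm, swap_mul_self, swap_mul_self, mul_one]
    exact one_mem _
  | succ s ih =>
    rw [show 8 * (s + 1) + 5 = 8 * s + 5 + 8 by ring, crossPerm_add_eight, mul_assoc,
      show l + 4 * (s + 1) = l + 4 + 4 * s by ring]
    exact mul_mem (mul_mem
      (swap_mul_swap_nested_mem_C hm hl (by omega) (by omega) (by omega))
      (swap_mul_swap_nested_mem_C hm (by omega) (by omega) (by omega) (by omega)))
      (ih (by omega) (by omega))

theorem swap_mul_swap_center_mem_C {n m s : ℕ} (hn : n = 8 * s + 5) (hm : 2 * n + 4 ≤ m) :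
    swap (4 * s + 3) (4 * s + 5) * swap (4 * s + 2) (4 * s + 4) ∈ C n m := by
  have hcenter := crossPerm_mul_center_mem_C (s := s) hm le_rfl (by omega)
  rw [← hn, (C n m).mul_mem_cancel_left (crossPerm_mem_C le_rfl (by omega))] at hcenter
  rw [swap_comm (4 * s + 3)]
  refine swap_mul_swap_mem_of_conj ((C n m).le_normalizer (threeCycle_inv (4 * s + 1) _ _ ▸
    inv_mem (threeCycle_mem_C (by omega) hm le_add_self (by omega)))) ?_ ?_ ?_ ?_ hcenter
  all_goals simp only [threeCycle, Perm.mul_apply, swap_apply_def]; split_ifs <;> omega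

theorem swap_mul_swap_mem_C_iff_shift {n m a b : ℕ} (hn : 5 ≤ n) (hm : 2 * n + 4 ≤ m)
    (hab : a % 2 ≠ b % 2) (ha : 1 ≤ a) (ham : a + 4 ≤ m) :
    swap (a + 2) (a + 4) * swap b (b + 2) ∈ C n m ↔
      swap a (a + 2) * swap b (b + 2) ∈ C n m := by
  have hσ := threeCycle_mem_C hn hm ha ham
  constructor <;> intro h
  · refine swap_mul_swap_mem_of_conj ((C n m).le_normalizer
      (threeCycle_inv a (a + 2) (a + 4) ▸ inv_mem hσ)) ?_ ?_ ?_ ?_ h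
    all_goals simp only [threeCycle, Perm.mul_apply, swap_apply_def]; split_ifs <;> omega
  · refine swap_mul_swap_mem_of_conj ((C n m).le_normalizer hσ) ?_ ?_ ?_ ?_ h
    all_goals simp only [threeCycle, Perm.mul_apply, swap_apply_def]; split_ifs <;> omega

theorem swap_mul_swap_mem_C_iff_of_mod_two_eq {n m a a' b : ℕ} (hn : 5 ≤ n)
    (hm : 2 * n + 4 ≤ m) (haa' : a % 2 = a' % 2) (hab : a % 2 ≠ b % 2) (ha : 1 ≤ a)
    (ham : a + 2 ≤ m) (ha' : 1 ≤ a') (ha'm : a' + 2 ≤ m) :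
    swap a (a + 2) * swap b (b + 2) ∈ C n m ↔ swap a' (a' + 2) * swap b (b + 2) ∈ C n m := by
  wlog hle : a ≤ a' generalizing a a'
  · exact (this haa'.symm (by omega) ha' ha'm ha ham (by omega)).symm
  obtain ⟨k, rfl⟩ : ∃ k, a' = a + 2 * k := ⟨(a' - a) / 2, by omega⟩
  induction k with
  | zero => rfl
  | succ k ih =>
    rw [ih (by omega) (by omega) (by omega) (by omega)]
    exact (swap_mul_swap_mem_C_iff_shift hn hm (by omega) (by omega) (by omega)).symm

theorem swap_mul_swap_mem_C {n m a b : ℕ} (hn : n % 8 = 5) (hm : 2 * n + 4 ≤ m) (ha : 1 ≤ a)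
    (ham : a + 2 ≤ m) (hb : 1 ≤ b) (hbm : b + 2 ≤ m) (hab : a % 2 ≠ b % 2) :
    swap a (a + 2) * swap b (b + 2) ∈ C n m := by
  have hcomm : ∀ x y : ℕ, x % 2 ≠ y % 2 →
      swap x (x + 2) * swap y (y + 2) = swap y (y + 2) * swap x (x + 2) :=
    fun x y _ => swap_mul_swap_comm (by omega) (by omega) (by omega) (by omega)
  obtain ⟨s, rfl⟩ : ∃ s, n = 8 * s + 5 := ⟨n / 8, by omega⟩
  wlog hodd : a % 2 = 1 generalizing a b
  · rw [hcomm a b hab]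
    exact this hb hbm ha ham hab.symm (by omega)
  have hcenter := swap_mul_swap_center_mem_C rfl hm
  rwa [swap_mul_swap_mem_C_iff_of_mod_two_eq (a' := a) (by omega) hm (by omega) (by omega)
      (by omega) (by omega) ha ham, hcomm _ _ (by omega),
    swap_mul_swap_mem_C_iff_of_mod_two_eq (a' := b) (by omega) hm (by omega) (by omega)
      (by omega) (by omega) hb hbm, hcomm _ _ (by omega)] at hcenter

theorem stmt12 (n : ℕ) (hn : n % 8 = 5)
    (m : ℕ) (hm : 4 * n - 4 ≤ m)
    (la lb : ℕ) (hla : 1 ≤ la) (hlb : 1 ≤ lb) (hpar : la % 2 ≠ lb % 2)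
    (hord : la + 2 < lb) (hlbm : lb + 2 ≤ m) :
    Equiv.swap la (la + 2) * Equiv.swap lb (lb + 2) ∈ C n m :=
  swap_mul_swap_mem_C hn (by omega) hla (by omega) hlb hlbm hpar
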